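/- arXiv:1806.06077 — 5 statements merged into one kernel-verified Lean document; each statement's English description precedes it below -/
import Mathlib

section
/- For fixed ω > 0, the function n ↦ (n/(n−1))·sinh(πω(n−1)/n) is monotone increasing in n on (1, ∞), and for fixed ω < 0 it is monotone decreasing in n. -/
/-!
With `c = π ω` and `x = c (n - 1) / n = c - c / n` we have `n / (n - 1) * sinh x = c * (sinh x / x)`.
Since `sinh` is convex on `[0, ∞)` and vanishes at `0`, its secant slope `sinh x / x` is
monotone there, and `x` increases with `n`; this gives the case `c > 0`, and `sinh` being odd
gives the case `c < 0`.
-/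

open Real Set

namespace Real

theorem convexOn_sinh : ConvexOn ℝ (Ici 0) sinh :=
  MonotoneOn.convexOn_of_deriv (convex_Ici 0) continuous_sinh.continuousOn
    differentiable_sinh.differentiableOn <| by
      rw [deriv_sinh, interior_Ici]
      exact cosh_strictMonoOn.monotoneOn.mono Ioi_subset_Ici_self

theorem monotoneOn_sinh_div_self : MonotoneOn (fun x => sinh x / x) (Ioi 0) := by
  intro x hx y hy hxy
  simpa using convexOn_sinh.secant_mono self_mem_Ici (Ioi_subset_Ici_self hx)
    (Ioi_subset_Ici_self hy) hx.ne' hy.ne' hxy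

end Real

theorem div_sub_one_mul_sinh_eq (c : ℝ) {n : ℝ} (hn : n ≠ 0) (hn₁ : n - 1 ≠ 0) :
    n / (n - 1) * sinh (c * (n - 1) / n) = c * (sinh (c * (n - 1) / n) / (c * (n - 1) / n)) := by
  rcases eq_or_ne c 0 with rfl | hc
  · simp
  · field_simp

theorem monotoneOn_mul_sub_one_div_self {c : ℝ} (hc : 0 ≤ c) :
    MonotoneOn (fun n : ℝ => c * (n - 1) / n) (Ioi 0) := by
  intro a ha b hb hab
  have hsub : ∀ n : ℝ, 0 < n → c * (n - 1) / n = c - c / n := fun n hn => by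
    field_simp
  simp only
  rw [hsub a ha, hsub b hb]
  exact sub_le_sub_left (div_le_div_of_nonneg_left hc ha hab) c

theorem monotoneOn_div_sub_one_mul_sinh {c : ℝ} (hc : 0 < c) :
    MonotoneOn (fun n : ℝ => n / (n - 1) * sinh (c * (n - 1) / n)) (Ioi 1) := by
  intro a ha b hb hab
  have ha₀ : (0 : ℝ) < a := zero_lt_one.trans ha
  have hb₀ : (0 : ℝ) < b := zero_lt_one.trans hb
  have hpos : ∀ n : ℝ, 1 < n → 0 < c * (n - 1) / n := fun n hn =>
    div_pos (mul_pos hc (sub_pos.mpr hn)) (zero_lt_one.trans hn)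
  simp only
  rw [div_sub_one_mul_sinh_eq c ha₀.ne' (sub_pos.mpr ha).ne',
    div_sub_one_mul_sinh_eq c hb₀.ne' (sub_pos.mpr hb).ne']
  exact mul_le_mul_of_nonneg_left (monotoneOn_sinh_div_self (hpos a ha) (hpos b hb)
    (monotoneOn_mul_sub_one_div_self hc.le ha₀ hb₀ hab)) hc.le

theorem antitoneOn_div_sub_one_mul_sinh {c : ℝ} (hc : c < 0) :
    AntitoneOn (fun n : ℝ => n / (n - 1) * sinh (c * (n - 1) / n)) (Ioi 1) := by
  simpa [neg_mul, neg_div, sinh_neg] using (monotoneOn_div_sub_one_mul_sinh (neg_pos.mpr hc)).neg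

open Real in
theorem f_monotone_in_n (ω : ℝ) :
    (0 < ω → MonotoneOn (fun n : ℝ => n / (n - 1) * Real.sinh (π * ω * (n - 1) / n))
      (Set.Ioi (1 : ℝ))) ∧
    (ω < 0 → AntitoneOn (fun n : ℝ => n / (n - 1) * Real.sinh (π * ω * (n - 1) / n))
      (Set.Ioi (1 : ℝ))) :=
  ⟨fun hω => monotoneOn_div_sub_one_mul_sinh (mul_pos pi_pos hω),
    fun hω => antitoneOn_div_sub_one_mul_sinh (mul_neg_of_pos_of_neg pi_pos hω)⟩
end

section
/- For every integer n ≥ 2 and every nonzero real ω, (n/(n−1))·sinh(πω(n−1)/n)/sinh(πω/n) ≤ ((n+1)/n)·sinh(πωn/(n+1))/sinh(πω/(n+1)). -/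
open Real

lemma convexOn_sinh_Ici : ConvexOn ℝ (Set.Ici (0:ℝ)) Real.sinh := by
  apply MonotoneOn.convexOn_of_deriv (convex_Ici 0)
    Real.continuous_sinh.continuousOn Real.differentiable_sinh.differentiableOn
  intro a ha b hb hab
  rw [Real.deriv_sinh, Real.cosh_le_cosh]
  rw [interior_Ici] at ha hb
  rw [abs_of_nonneg ha.le, abs_of_nonneg hb.le]
  exact hab

lemma sinh_div_mono {x y : ℝ} (hx : 0 < x) (hxy : x ≤ y) :
    Real.sinh x / x ≤ Real.sinh y / y := by
  have hy : 0 < y := hx.trans_le hxy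
  have h := convexOn_sinh_Ici.slope_mono (Set.self_mem_Ici)
    (a := x) (b := y) ⟨hx.le, by simp [hx.ne']⟩ ⟨hy.le, by simp [hy.ne']⟩ hxy
  simpa [slope_def_field] using h

-- main case ω > 0
lemma sinh_ratio_ineq_pos (n : ℕ) (hn : 2 ≤ n) (ω : ℝ) (hω : 0 < ω) :
    (n : ℝ) / ((n : ℝ) - 1) * Real.sinh (π * ω * ((n : ℝ) - 1) / n) / Real.sinh (π * ω / n) ≤
    ((n : ℝ) + 1) / n * Real.sinh (π * ω * n / ((n : ℝ) + 1)) / Real.sinh (π * ω / ((n : ℝ) + 1)) := by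
  have hn2 : (2:ℝ) ≤ (n:ℝ) := by exact_mod_cast hn
  have hn0 : (0:ℝ) < n := by linarith
  have hn1 : (0:ℝ) < (n:ℝ) - 1 := by linarith
  have hn1' : (0:ℝ) < (n:ℝ) + 1 := by linarith
  have ha : 0 < π * ω := mul_pos Real.pi_pos hω
  set A : ℝ := π * ω * ((n : ℝ) - 1) / n with hA
  set B : ℝ := π * ω / n with hB
  set C : ℝ := π * ω * n / ((n : ℝ) + 1) with hC
  set D : ℝ := π * ω / ((n : ℝ) + 1) with hD
  have hApos : 0 < A := by positivity
  have hBpos : 0 < B := by positivity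
  have hCpos : 0 < C := by positivity
  have hDpos : 0 < D := by positivity
  have hAC : A ≤ C := by
    rw [hA, hC, div_le_div_iff₀ hn0 hn1']
    nlinarith [mul_pos Real.pi_pos hω]
  have hDB : D ≤ B := by
    rw [hD, hB, div_le_div_iff₀ hn1' hn0]
    nlinarith [mul_pos Real.pi_pos hω]
  have h1 : Real.sinh A / A ≤ Real.sinh C / C := sinh_div_mono hApos hAC
  have h2 : Real.sinh D ≤ Real.sinh B := Real.sinh_le_sinh.2 hDB
  have hsB : 0 < Real.sinh B := Real.sinh_pos_iff.2 hBpos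
  have hsD : 0 < Real.sinh D := Real.sinh_pos_iff.2 hDpos
  have key : Real.sinh A / A / Real.sinh B ≤ Real.sinh C / C / Real.sinh D := by
    apply div_le_div₀ (by positivity) h1 hsD h2
  have eA : (n : ℝ) / ((n : ℝ) - 1) * Real.sinh A = (π * ω) * (Real.sinh A / A) := by
    rw [hA]; field_simp
  have eC : ((n : ℝ) + 1) / n * Real.sinh C = (π * ω) * (Real.sinh C / C) := by
    rw [hC]; field_simp
  rw [eA, eC, mul_div_assoc, mul_div_assoc]
  exact mul_le_mul_of_nonneg_left key ha.le

open Real in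
theorem sinh_ratio_ineq (n : ℕ) (hn : 2 ≤ n) (ω : ℝ) (hω : ω ≠ 0) :
    (n : ℝ) / ((n : ℝ) - 1) * Real.sinh (π * ω * ((n : ℝ) - 1) / n) / Real.sinh (π * ω / n) ≤
    ((n : ℝ) + 1) / n * Real.sinh (π * ω * n / ((n : ℝ) + 1)) / Real.sinh (π * ω / ((n : ℝ) + 1)) := by
  rcases hω.lt_or_gt with h | h
  · have h' : 0 < -ω := by linarith
    have main := sinh_ratio_ineq_pos n hn (-ω) h'
    have e1 : π * ω * ((n : ℝ) - 1) / n = -(π * (-ω) * ((n : ℝ) - 1) / n) := by ring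
    have e2 : π * ω / n = -(π * (-ω) / n) := by ring
    have e3 : π * ω * n / ((n : ℝ) + 1) = -(π * (-ω) * n / ((n : ℝ) + 1)) := by ring
    have e4 : π * ω / ((n : ℝ) + 1) = -(π * (-ω) / ((n : ℝ) + 1)) := by ring
    have l : (n : ℝ) / ((n : ℝ) - 1) * Real.sinh (π * ω * ((n : ℝ) - 1) / n) / Real.sinh (π * ω / n)
        = (n : ℝ) / ((n : ℝ) - 1) * Real.sinh (π * (-ω) * ((n : ℝ) - 1) / n) / Real.sinh (π * (-ω) / n) := by
      rw [e1, e2, Real.sinh_neg, Real.sinh_neg]; ring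
    have r : ((n : ℝ) + 1) / n * Real.sinh (π * ω * n / ((n : ℝ) + 1)) / Real.sinh (π * ω / ((n : ℝ) + 1))
        = ((n : ℝ) + 1) / n * Real.sinh (π * (-ω) * n / ((n : ℝ) + 1)) / Real.sinh (π * (-ω) / ((n : ℝ) + 1)) := by
      rw [e3, e4, Real.sinh_neg, Real.sinh_neg]; ring
    rw [l, r]; exact main
  · exact sinh_ratio_ineq_pos n hn ω h
end

section
/- For 0 < σa, σb, the limit of the symmetric kernel G_{α,z}(σa,σb) = (z/(1−α))·(σa^{α/z} − σb^{α/z})(σa^{(1−α)/z} − σb^{(1−α)/z})/((σa − σb)(σa^{1/z} − σb^{1/z})) as α → 1, z → 1 (along z = α) equals (log σa − log σb)/(σa − σb) when σa ≠ σb. -/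
/-!
Along `z = α` the factor `σa ^ (α / α) - σb ^ (α / α)` is `σa - σb` and cancels. With
`s = (1 - α) / α`, which tends to `0` through nonzero values, the prefactor `α / (1 - α)` is `1 / s`,
so the kernel equals `((σa ^ s - σb ^ s) / s) / (σa ^ (1 / α) - σb ^ (1 / α))`. The numerator is a
difference quotient of `t ↦ σa ^ t - σb ^ t` at `0`, tending to `log σa - log σb`, and the
denominator tends to `σa - σb`.
-/

open Filter Topology Real

lemma tendsto_rpow_sub_rpow_div_nhdsNE_zero {a b : ℝ} (ha : 0 < a) (hb : 0 < b) :
    Tendsto (fun t : ℝ => (a ^ t - b ^ t) / t) (𝓝[≠] 0) (𝓝 (log a - log b)) := by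
  have hderiv : HasDerivAt (fun t : ℝ => a ^ t - b ^ t) (log a - log b) 0 := by
    simpa [Pi.sub_def] using (hasStrictDerivAt_const_rpow ha 0).hasDerivAt.sub
      (hasStrictDerivAt_const_rpow hb 0).hasDerivAt
  refine hderiv.tendsto_slope_zero.congr fun t => ?_
  simp [div_eq_inv_mul]

lemma tendsto_one_sub_div_self_nhdsNE_one :
    Tendsto (fun α : ℝ => (1 - α) / α) (𝓝[≠] 1) (𝓝[≠] 0) := by
  refine tendsto_nhdsWithin_iff.mpr ⟨?_, ?_⟩
  · have hcont : ContinuousAt (fun α : ℝ => (1 - α) / α) 1 := by fun_prop (disch := norm_num)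
    simpa using hcont.tendsto.mono_left nhdsWithin_le_nhds
  · filter_upwards [self_mem_nhdsWithin, nhdsWithin_le_nhds (eventually_ne_nhds one_ne_zero)]
      with α hα1 hα0
    exact div_ne_zero (sub_ne_zero.mpr (Ne.symm hα1)) hα0

lemma tendsto_rpow_one_div_sub_rpow_one_div_nhds_one {a b : ℝ} (ha : 0 < a) (hb : 0 < b) :
    Tendsto (fun α : ℝ => a ^ (1 / α) - b ^ (1 / α)) (𝓝 1) (𝓝 (a - b)) := by
  have hcont : ContinuousAt (fun α : ℝ => a ^ (1 / α) - b ^ (1 / α)) 1 := by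
    fun_prop (disch := positivity)
  simpa using hcont.tendsto

open Filter in
theorem G_limit_fisher (σa σb : ℝ) (ha : 0 < σa) (hb : 0 < σb) (hab : σa ≠ σb) :
    Tendsto (fun α : ℝ =>
        (α / (1 - α)) *
          ((σa ^ (α / α) - σb ^ (α / α)) * (σa ^ ((1 - α) / α) - σb ^ ((1 - α) / α)) /
            ((σa - σb) * (σa ^ (1 / α) - σb ^ (1 / α)))))
      (nhdsWithin 1 {1}ᶜ) (nhds ((Real.log σa - Real.log σb) / (σa - σb))) := by
  have hsub : σa - σb ≠ 0 := sub_ne_zero.mpr hab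
  have hlim := ((tendsto_rpow_sub_rpow_div_nhdsNE_zero ha hb).comp
    tendsto_one_sub_div_self_nhdsNE_one).div
    ((tendsto_rpow_one_div_sub_rpow_one_div_nhds_one ha hb).mono_left nhdsWithin_le_nhds) hsub
  refine hlim.congr' ?_
  filter_upwards [self_mem_nhdsWithin, nhdsWithin_le_nhds (eventually_ne_nhds one_ne_zero)]
    with α hα1 hα0
  have hα1' : (1 : ℝ) - α ≠ 0 := sub_ne_zero.mpr (Ne.symm hα1)
  simp only [Pi.div_apply, Function.comp_apply, div_self hα0, rpow_one]
  field_simp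
end

section
/- The function A_α(σa,σb) defined for positive reals σa ≠ σb and α > 0, α ≠ 1 by A_α(σa,σb) = α / G_{α,α}(σa,σb) with G_{α,α}(σa,σb) = (α/(1−α))·(σa^{(1−α)/α} − σb^{(1−α)/α})/(σa^{1/α} − σb^{1/α}), satisfies min(σa,σb) ≤ A_α(σa,σb) ≤ max(σa,σb). -/
/-!
With `p = (1 - α) / α` we have `1 / α = p + 1`, and the expression equals
`(1 - α) (σa^(p+1) - σb^(p+1)) / (σa^p - σb^p) = (p / (p + 1)) · Δ(t^(p+1)) / Δ(t^p)`.
Cauchy's mean value theorem for `t ↦ t^(p+1)` and `t ↦ t^p` on the interval between `σa` and `σb`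
turns this ratio of increments into the ratio of derivatives `(p+1) c^p / (p c^(p-1))` at an
intermediate point `c`, so the expression is `c` itself.
-/

open Set Real

theorem exists_mem_Ioo_mul_rpow_add_one_sub_eq {x y : ℝ} (hy : 0 < y) (hyx : y < x) (p : ℝ) :
    ∃ c ∈ Ioo y x, p * (x ^ (p + 1) - y ^ (p + 1)) = (p + 1) * (x ^ p - y ^ p) * c := by
  have hderiv (r : ℝ) : ∀ t ∈ Icc y x, HasDerivAt (· ^ r) (r * t ^ (r - 1)) t :=
    fun t ht => hasDerivAt_rpow_const (Or.inl (hy.trans_le ht.1).ne')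
  have hcont (r : ℝ) : ContinuousOn (· ^ r) (Icc y x) :=
    fun t ht => (hderiv r t ht).continuousAt.continuousWithinAt
  obtain ⟨c, hc, hmvt⟩ := exists_ratio_hasDerivAt_eq_ratio_slope _ _ hyx (hcont (p + 1))
    (fun t ht => hderiv (p + 1) t (Ioo_subset_Icc_self ht)) _ _ (hcont p)
    (fun t ht => hderiv p t (Ioo_subset_Icc_self ht))
  have hc0 : 0 < c := hy.trans hc.1
  refine ⟨c, hc, mul_right_cancel₀ (rpow_pos_of_pos hc0 (p - 1)).ne' ?_⟩
  rw [add_sub_cancel_right, rpow_sub_one hc0.ne'] at hmvt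
  field_simp at hmvt ⊢
  linear_combination -hmvt

theorem exists_mem_uIoo_mul_rpow_add_one_sub_eq {x y : ℝ} (hx : 0 < x) (hy : 0 < y) (hxy : x ≠ y)
    (p : ℝ) :
    ∃ c ∈ uIoo x y, p * (x ^ (p + 1) - y ^ (p + 1)) = (p + 1) * (x ^ p - y ^ p) * c := by
  rcases hxy.lt_or_gt with hlt | hgt
  · obtain ⟨c, hc, h⟩ := exists_mem_Ioo_mul_rpow_add_one_sub_eq hx hlt p
    exact ⟨c, uIoo_of_lt hlt ▸ hc, by linear_combination -h⟩
  · obtain ⟨c, hc, h⟩ := exists_mem_Ioo_mul_rpow_add_one_sub_eq hy hgt p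
    exact ⟨c, uIoo_of_gt hgt ▸ hc, h⟩

theorem A_mean (σa σb α : ℝ) (ha : 0 < σa) (hb : 0 < σb) (hab : σa ≠ σb)
    (hα : 0 < α) (hα1 : α ≠ 1) :
    min σa σb ≤
        α / ((α / (1 - α)) *
          ((σa ^ ((1 - α) / α) - σb ^ ((1 - α) / α)) / (σa ^ (1 / α) - σb ^ (1 / α)))) ∧
      α / ((α / (1 - α)) *
          ((σa ^ ((1 - α) / α) - σb ^ ((1 - α) / α)) / (σa ^ (1 / α) - σb ^ (1 / α)))) ≤
        max σa σb := by
  set p := (1 - α) / α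
  have h1α : 1 - α ≠ 0 := sub_ne_zero.2 hα1.symm
  have hp : p ≠ 0 := div_ne_zero h1α hα.ne'
  have hq : 1 / α = p + 1 := by rw [div_add_one hα.ne', sub_add_cancel]
  have hN : σa ^ p - σb ^ p ≠ 0 := sub_ne_zero.2 fun h => hab ((rpow_left_inj ha.le hb.le hp).1 h)
  have hD : σa ^ (p + 1) - σb ^ (p + 1) ≠ 0 :=
    sub_ne_zero.2 fun h => hab ((rpow_left_inj ha.le hb.le (hq ▸ by positivity)).1 h)
  obtain ⟨c, ⟨hc_min, hc_max⟩, hc⟩ := exists_mem_uIoo_mul_rpow_add_one_sub_eq ha hb hab p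
  suffices h : α / ((α / (1 - α)) * ((σa ^ p - σb ^ p) / (σa ^ (1 / α) - σb ^ (1 / α)))) = c by
    rw [h]; exact ⟨hc_min.le, hc_max.le⟩
  rw [hq, div_eq_iff (mul_ne_zero (div_ne_zero hα.ne' h1α) (div_ne_zero hN hD))]
  field_simp
  have hαp : α * p = 1 - α := mul_div_cancel₀ _ hα.ne'
  linear_combination α * hc - (σa ^ (p + 1) - σb ^ (p + 1) - (σa ^ p - σb ^ p) * c) * hαp
end

section
/- For any matrix-valued differentiable family X(t) of square matrices, d/dt exp(X(t)) = ∫₀¹ exp(x·X(t)) · X′(t) · exp((1−x)·X(t)) dx. -/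
/-!
Differentiating `x ↦ exp (x • B) * exp ((1 - x) • A)` and integrating over `[0, 1]` gives
`exp B - exp A = ∫ x in 0..1, exp (x • B) * (B - A) * exp ((1 - x) • A)`. Taking `A + s • B` for
`B` writes `exp (A + s • B) - exp A` as `s` times a function continuous in `s`, whose value at
`s = 0` is therefore the derivative of `exp` at `A` in direction `B`. As `exp` is analytic, this
directional derivative is its Fréchet derivative, and the chain rule along `X` concludes.
-/

open Matrix intervalIntegral

attribute [local instance] Matrix.linftyOpNormedRing Matrix.linftyOpNormedAlgebra

theorem hasDerivAt_of_sub_eq_smul {𝕜 E : Type*} [NontriviallyNormedField 𝕜]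
    [NormedAddCommGroup E] [NormedSpace 𝕜 E] {f Φ : 𝕜 → E} {a : 𝕜}
    (hΦ : ContinuousAt Φ a) (hf : ∀ s, f s - f a = (s - a) • Φ s) :
    HasDerivAt f (Φ a) a := by
  rw [hasDerivAt_iff_tendsto_slope]
  refine (hΦ.tendsto.mono_left nhdsWithin_le_nhds).congr' ?_
  filter_upwards [self_mem_nhdsWithin] with s hs
  rw [slope_def_module, hf, smul_smul, inv_mul_cancel₀ (sub_ne_zero.2 hs), one_smul]

namespace NormedSpace

variable {𝔸 : Type*} [NormedRing 𝔸] [NormedAlgebra ℝ 𝔸] [CompleteSpace 𝔸]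

theorem continuous_exp_of_real : Continuous (exp : 𝔸 → 𝔸) :=
  continuous_iff_continuousAt.2 fun A => (exp_analytic (𝕂 := ℝ) A).continuousAt

theorem hasDerivAt_exp_smul_mul_exp_one_sub_smul (A B : 𝔸) (x : ℝ) :
    HasDerivAt (fun x : ℝ => exp (x • B) * exp ((1 - x) • A))
      (exp (x • B) * (B - A) * exp ((1 - x) • A)) x := by
  have hB : HasDerivAt (fun x : ℝ => exp (x • B)) (exp (x • B) * B) x :=
    hasDerivAt_exp_smul_const B x
  have hA : HasDerivAt (fun x : ℝ => exp ((1 - x) • A))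
      ((-1 : ℝ) • (A * exp ((1 - x) • A))) x :=
    (hasDerivAt_exp_smul_const' A (1 - x)).scomp x ((hasDerivAt_id x).const_sub 1)
  refine (hB.mul hA).congr_deriv ?_
  rw [neg_smul, one_smul]
  noncomm_ring

theorem exp_sub_exp_eq_integral (A B : 𝔸) :
    exp B - exp A = ∫ x in (0:ℝ)..1, exp (x • B) * (B - A) * exp ((1 - x) • A) := by
  have hexp := continuous_exp_of_real (𝔸 := 𝔸)
  rw [integral_eq_sub_of_hasDerivAt (fun x _ => hasDerivAt_exp_smul_mul_exp_one_sub_smul A B x)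
    (Continuous.intervalIntegrable (by fun_prop) 0 1)]
  simp

theorem hasDerivAt_exp_add_smul (A B : 𝔸) :
    HasDerivAt (fun s : ℝ => exp (A + s • B))
      (∫ x in (0:ℝ)..1, exp (x • A) * B * exp ((1 - x) • A)) 0 := by
  have hexp := continuous_exp_of_real (𝔸 := 𝔸)
  have hΦ : Continuous fun s : ℝ =>
      ∫ x in (0:ℝ)..1, exp (x • (A + s • B)) * B * exp ((1 - x) • A) :=
    continuous_parametric_intervalIntegral_of_continuous' (by fun_prop) 0 1
  refine (hasDerivAt_of_sub_eq_smul (f := fun s : ℝ => exp (A + s • B)) hΦ.continuousAt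
    fun s => ?_).congr_deriv (by simp)
  rw [zero_smul, add_zero, exp_sub_exp_eq_integral, add_sub_cancel_left, sub_zero,
    ← integral_smul]
  simp only [mul_smul_comm, smul_mul_assoc]

theorem fderiv_exp_apply (A B : 𝔸) :
    fderiv ℝ exp A B = ∫ x in (0:ℝ)..1, exp (x • A) * B * exp ((1 - x) • A) := by
  have hline : HasDerivAt (fun s : ℝ => A + s • B) B 0 := by
    simpa using ((hasDerivAt_id (0:ℝ)).smul_const B).const_add A
  have hexp : HasFDerivAt exp (fderiv ℝ exp A) (A + (0:ℝ) • B) := by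
    simpa using (exp_analytic (𝕂 := ℝ) A).differentiableAt.hasFDerivAt
  exact (hexp.comp_hasDerivAt 0 hline).unique (hasDerivAt_exp_add_smul A B)

end NormedSpace

theorem duhamel_deriv_exp {d : Type*} [Fintype d] [DecidableEq d]
    (X : ℝ → Matrix d d ℂ) (X' : Matrix d d ℂ) (t : ℝ)
    (hX : HasDerivAt X X' t) :
    HasDerivAt (fun s => NormedSpace.exp (X s))
      (∫ x in (0:ℝ)..1,
        NormedSpace.exp (x • X t) * X' * NormedSpace.exp ((1 - x) • X t)) t := by
  have h := (NormedSpace.exp_analytic (𝕂 := ℝ) (X t)).differentiableAt.hasFDerivAt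
    |>.comp_hasDerivAt t hX
  rw [NormedSpace.fderiv_exp_apply] at h
  exact h
end
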